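/- Let q : ℝ → ℝ be measurable with ∫₀^π q(t)² dt < ∞, let h, h̃, H, H₁, H₂ ∈ ℝ with h ≠ h̃ and ρ := H·H₁ − H₂ > 0. Suppose φ, ψ : [0,π] × ℝ → ℝ are such that for every λ ∈ ℝ, φ(·,λ) is a solution of −y'' + q y = λ y on [0,π] with φ(0,λ) = 1, ∂ₓφ(0,λ) = h, and ψ(·,λ) is a solution of −y'' + q y = λ y on [0,π] with ψ(0,λ) = 1, ∂ₓψ(0,λ) = h̃. Define Φ(λ) := λ·(∂ₓφ(π,λ) + H·φ(π,λ)) − H₁·∂ₓφ(π,λ) − H₂·φ(π,λ) and Ψ(λ) := λ·(∂ₓψ(π,λ) + H·ψ(π,λ)) − H₁·∂ₓψ(π,λ) − H₂·ψ(π,λ). Let λₙ ∈ ℝ with Φ(λₙ) = 0, Ψ(λₙ) ≠ 0 and λₙ ≠ H₁, and assume the maps λ ↦ ∫₀^π ψ(x,λ)·φ(x,λₙ) dx, λ ↦ ∫₀^π φ(x,λ)·φ(x,λₙ) dx, λ ↦ ψ(π,λ) and λ ↦ φ(π,λ) are continuous at λₙ. Then Φ is differentiable at λₙ and Φ'(λₙ)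 = γₙ·Ψ(λₙ)/(h − h̃), where γₙ := ∫₀^π φ(x,λₙ)² dx + (∂ₓφ(π,λₙ) + H·φ(π,λₙ))²/ρ; equivalently γₙ = (h − h̃)·Φ'(λₙ)/Ψ(λₙ). -/

import Mathlib

open Real MeasureTheory Set intervalIntegral

/-- `y` (with derivative `y'`) is a solution of `-y'' + q y = λ y` on `[0, π]`
in the Carathéodory sense. -/
def IsSol (q : ℝ → ℝ) (lam : ℝ) (y y' : ℝ → ℝ) : Prop :=
  ContinuousOn y' (Set.Icc 0 π) ∧
  (∀ x ∈ Set.Icc (0:ℝ) π, HasDerivAt y (y' x) x) ∧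
  ∀ x ∈ Set.Icc (0:ℝ) π, y' x = y' 0 + ∫ t in (0:ℝ)..x, (q t - lam) * y t

/-!
For Carathéodory solutions `y'` is absolutely continuous with `y'' = (q - λ) y` a.e., so the
Wronskian `y' z - y z'` of solutions for `λ` and `μ` is absolutely continuous with derivative
`(μ - λ) y z` a.e.; this is the Lagrange identity. Applied to `φ(·,λ)` and `φ(·,λₙ)`, which share
their initial data, and combined with `Φ(λₙ) = 0`, it factors
`φ(π,λₙ) Φ(λ) = (λ - λₙ) (φ(π,λ) X - (λ - H₁) ∫ φ(·,λ) φ(·,λₙ))`, `X = ∂ₓφ(π,λₙ) + H φ(π,λₙ)`,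
so `Φ'(λₙ)` is the value of the second factor at `λₙ`. Applied to `ψ(·,λₙ)` and `φ(·,λₙ)` it gives
the Wronskian `h̃ - h` at `π`, which rewrites that value as `γₙ Ψ(λₙ) / (h - h̃)`.
-/

open Filter

theorem AbsolutelyContinuousOnInterval.congr {X : Type*} [PseudoMetricSpace X] {f g : ℝ → X}
    {a b : ℝ} (hf : AbsolutelyContinuousOnInterval f a b) (hfg : EqOn f g (uIcc a b)) :
    AbsolutelyContinuousOnInterval g a b := by
  refine Tendsto.congr' ?_ hf
  rw [EventuallyEq, eventually_inf_principal]
  filter_upwards with E hE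
  exact Finset.sum_congr rfl fun i hi => by rw [hfg (hE.1 i hi).1, hfg (hE.1 i hi).2]

theorem absolutelyContinuousOnInterval_of_eqOn_integral {f g : ℝ → ℝ} {a b : ℝ}
    (hg : IntervalIntegrable g volume a b) (hf : ∀ x ∈ uIcc a b, f x = f a + ∫ t in a..x, g t) :
    AbsolutelyContinuousOnInterval f a b :=
  (contDiffOn_const.absolutelyContinuousOnInterval.fun_add
    (hg.absolutelyContinuousOnInterval_intervalIntegral left_mem_uIcc)).congr
    fun x hx => (hf x hx).symm

theorem hasDerivAt_of_forall_eq_sub_mul {𝕜 : Type*} [NontriviallyNormedField 𝕜] {f g : 𝕜 → 𝕜}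
    {a : 𝕜} (hfg : ∀ x, f x = (x - a) * g x) (hg : ContinuousAt g a) : HasDerivAt f (g a) a := by
  rw [hasDerivAt_iff_tendsto_slope]
  refine hg.continuousWithinAt.tendsto.congr' ?_
  filter_upwards [self_mem_nhdsWithin] with x hx
  rw [slope_def_field, hfg, hfg, sub_self, zero_mul, sub_zero,
    mul_div_cancel_left₀ _ (sub_ne_zero.2 hx)]

namespace IsSol

variable {q : ℝ → ℝ} {lam : ℝ} {y y' : ℝ → ℝ}

theorem continuousOn (hy : IsSol q lam y y') : ContinuousOn y (Icc 0 π) :=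
  fun x hx => (hy.2.1 x hx).continuousAt.continuousWithinAt

theorem intervalIntegrable_potential_mul (hq : IntegrableOn q (Icc 0 π))
    (hy : IsSol q lam y y') : IntervalIntegrable (fun t => (q t - lam) * y t) volume 0 π := by
  rw [intervalIntegrable_iff_integrableOn_Icc_of_le pi_pos.le]
  exact (hq.sub (integrableOn_const measure_Icc_lt_top.ne)).mul_continuousOn hy.continuousOn
    isCompact_Icc

theorem absolutelyContinuousOnInterval (hy : IsSol q lam y y') :
    AbsolutelyContinuousOnInterval y 0 π := by
  obtain ⟨hy'c, hderiv, -⟩ := hy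
  rw [← uIcc_of_le pi_pos.le] at hy'c hderiv
  have hy'int : IntervalIntegrable y' volume 0 π := hy'c.intervalIntegrable
  refine absolutelyContinuousOnInterval_of_eqOn_integral hy'int fun x hx => ?_
  have hsub : uIcc 0 x ⊆ uIcc 0 π := uIcc_subset_uIcc_left hx
  rw [integral_eq_sub_of_hasDerivAt (fun t ht => hderiv t (hsub ht)) (hy'int.mono_set hsub)]
  ring

theorem absolutelyContinuousOnInterval_deriv (hq : IntegrableOn q (Icc 0 π))
    (hy : IsSol q lam y y') : AbsolutelyContinuousOnInterval y' 0 π :=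
  absolutelyContinuousOnInterval_of_eqOn_integral (hy.intervalIntegrable_potential_mul hq)
    (uIcc_of_le pi_pos.le ▸ hy.2.2)

theorem ae_hasDerivAt_deriv (hq : IntegrableOn q (Icc 0 π)) (hy : IsSol q lam y y') :
    ∀ᵐ x, x ∈ Ioo 0 π → HasDerivAt y' ((q x - lam) * y x) x := by
  filter_upwards [(hy.intervalIntegrable_potential_mul hq).ae_hasDerivAt_integral] with x hx hxI
  have hxI' : x ∈ uIcc 0 π := uIcc_of_le pi_pos.le ▸ Ioo_subset_Icc_self hxI
  refine ((hx hxI' 0 left_mem_uIcc).const_add (y' 0)).congr_of_eventuallyEq ?_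
  filter_upwards [Icc_mem_nhds hxI.1 hxI.2] with t ht
  exact hy.2.2 t ht

theorem wronskian_sub_eq_integral (hq : IntegrableOn q (Icc 0 π)) {mu : ℝ} {z z' : ℝ → ℝ}
    (hy : IsSol q lam y y') (hz : IsSol q mu z z') :
    y' π * z π - y π * z' π - (y' 0 * z 0 - y 0 * z' 0)
      = (mu - lam) * ∫ x in (0:ℝ)..π, y x * z x := by
  have hW : AbsolutelyContinuousOnInterval (fun x => y' x * z x - y x * z' x) 0 π :=
    ((hy.absolutelyContinuousOnInterval_deriv hq).mul hz.absolutelyContinuousOnInterval).sub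
      (hy.absolutelyContinuousOnInterval.mul (hz.absolutelyContinuousOnInterval_deriv hq))
  rw [← intervalIntegral.integral_const_mul, ← hW.integral_deriv_eq_sub]
  refine integral_congr_ae ?_
  filter_upwards [hy.ae_hasDerivAt_deriv hq, hz.ae_hasDerivAt_deriv hq, Measure.ae_ne volume π]
    with x hy'x hz'x hxπ hx
  rw [uIoc_of_le pi_pos.le] at hx
  have hxI : x ∈ Icc 0 π := Ioc_subset_Icc_self hx
  have hxI' : x ∈ Ioo 0 π := ⟨hx.1, lt_of_le_of_ne hx.2 hxπ⟩
  refine (((hy'x hxI').mul (hz.2.1 x hxI)).sub ((hy.2.1 x hxI).mul (hz'x hxI'))).deriv.trans ?_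
  ring

end IsSol

theorem hasDerivAt_of_wronskian_identity {φ φx : ℝ → ℝ → ℝ} {Φ : ℝ → ℝ} {H H₁ H₂ lamn : ℝ}
    (hΦ : ∀ lam : ℝ, Φ lam =
      lam * (φx lam π + H * φ lam π) - H₁ * φx lam π - H₂ * φ lam π)
    (hΦn : Φ lamn = 0)
    (hW : ∀ lam : ℝ, φx lam π * φ lamn π - φ lam π * φx lamn π
      = (lamn - lam) * ∫ x in (0:ℝ)..π, φ lam x * φ lamn x)
    (hφπ : φ lamn π ≠ 0)
    (hJ : ContinuousAt (fun lam => ∫ x in (0:ℝ)..π, φ lam x * φ lamn x) lamn)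
    (hφ : ContinuousAt (fun lam => φ lam π) lamn) :
    HasDerivAt Φ ((φ lamn π * (φx lamn π + H * φ lamn π)
      - (lamn - H₁) * ∫ x in (0:ℝ)..π, φ lamn x * φ lamn x) / φ lamn π) lamn := by
  set g : ℝ → ℝ := fun lam => (φ lam π * (φx lamn π + H * φ lamn π)
    - (lam - H₁) * ∫ x in (0:ℝ)..π, φ lam x * φ lamn x) / φ lamn π
  refine hasDerivAt_of_forall_eq_sub_mul (g := g) (fun lam => ?_) (by fun_prop)
  rw [hΦ] at hΦn
  rw [hΦ, mul_div_assoc', eq_div_iff hφπ]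
  linear_combination (lam - H₁) * hW lam + φ lam π * hΦn

theorem stmt_16_general
    (q : ℝ → ℝ) (hq_meas : Measurable q)
    (hq_L2 : IntegrableOn (fun t => (q t) ^ 2) (Set.Icc 0 π))
    (h ht H H₁ H₂ : ℝ) (hht : h ≠ ht) (hρ : 0 < H * H₁ - H₂)
    (φ φx ψ ψx : ℝ → ℝ → ℝ)
    (hφ : ∀ lam : ℝ, IsSol q lam (φ lam) (φx lam))
    (hφ0 : ∀ lam : ℝ, φ lam 0 = 1) (hφx0 : ∀ lam : ℝ, φx lam 0 = h)
    (hψ : ∀ lam : ℝ, IsSol q lam (ψ lam) (ψx lam))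
    (hψ0 : ∀ lam : ℝ, ψ lam 0 = 1) (hψx0 : ∀ lam : ℝ, ψx lam 0 = ht)
    (Φ Ψ : ℝ → ℝ)
    (hΦ : ∀ lam : ℝ, Φ lam =
      lam * (φx lam π + H * φ lam π) - H₁ * φx lam π - H₂ * φ lam π)
    (hΨ : ∀ lam : ℝ, Ψ lam =
      lam * (ψx lam π + H * ψ lam π) - H₁ * ψx lam π - H₂ * ψ lam π)
    (lamn : ℝ) (hΦn : Φ lamn = 0) (hH₁n : lamn ≠ H₁)
    (hcont₂ : ContinuousAt (fun lam => ∫ x in (0:ℝ)..π, φ lam x * φ lamn x) lamn)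
    (hcont₄ : ContinuousAt (fun lam => φ lam π) lamn)
    (γn : ℝ)
    (hγn : γn = (∫ x in (0:ℝ)..π, (φ lamn x) ^ 2) +
      (φx lamn π + H * φ lamn π) ^ 2 / (H * H₁ - H₂)) :
    HasDerivAt Φ (γn * Ψ lamn / (h - ht)) lamn := by
  have hq : IntegrableOn q (Icc 0 π) :=
    ((memLp_two_iff_integrable_sq hq_meas.aestronglyMeasurable).2 hq_L2).integrable one_le_two
  have hφφ (lam : ℝ) : φx lam π * φ lamn π - φ lam π * φx lamn π
      = (lamn - lam) * ∫ x in (0:ℝ)..π, φ lam x * φ lamn x := by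
    simpa [hφ0, hφx0] using (hφ lam).wronskian_sub_eq_integral hq (hφ lamn)
  have hψφ : ψx lamn π * φ lamn π - ψ lamn π * φx lamn π = ht - h := by
    have := (hψ lamn).wronskian_sub_eq_integral hq (hφ lamn)
    simp only [hψ0, hφ0, hψx0, hφx0, sub_self, zero_mul] at this
    linear_combination this
  have hΦn' := hΦ lamn ▸ hΦn
  have hφπ : φ lamn π ≠ 0 := by
    intro h0
    rw [h0] at hΦn' hψφ
    have : (lamn - H₁) * φx lamn π = 0 := by linear_combination hΦn'
    rw [(mul_eq_zero.1 this).resolve_left (sub_ne_zero.2 hH₁n)] at hψφ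
    exact hht (by linarith)
  convert hasDerivAt_of_wronskian_identity hΦ hΦn hφφ hφπ hcont₂ hcont₄ using 1
  set X := φx lamn π + H * φ lamn π
  have hΨφ : Ψ lamn * φ lamn π = (lamn - H₁) * (ht - h) := by
    rw [hΨ]; linear_combination ψ lamn π * hΦn' + (lamn - H₁) * hψφ
  have hXρ : X ^ 2 / (H * H₁ - H₂) * (lamn - H₁) = -(φ lamn π * X) := by
    rw [div_mul_eq_mul_div, div_eq_iff hρ.ne']
    linear_combination X * hΦn'
  simp only [hγn, ← sq]
  rw [div_eq_div_iff (sub_ne_zero.2 hht) hφπ]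
  linear_combination ((∫ x in (0:ℝ)..π, φ lamn x ^ 2) + X ^ 2 / (H * H₁ - H₂)) * hΨφ
    + (ht - h) * hXρ

theorem stmt_16
    (q : ℝ → ℝ) (hq_meas : Measurable q)
    (hq_L2 : IntegrableOn (fun t => (q t) ^ 2) (Set.Icc 0 π))
    (h ht H H₁ H₂ : ℝ) (hht : h ≠ ht) (hρ : 0 < H * H₁ - H₂)
    (φ φx ψ ψx : ℝ → ℝ → ℝ)
    (hφ : ∀ lam : ℝ, IsSol q lam (φ lam) (φx lam))
    (hφ0 : ∀ lam : ℝ, φ lam 0 = 1) (hφx0 : ∀ lam : ℝ, φx lam 0 = h)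
    (hψ : ∀ lam : ℝ, IsSol q lam (ψ lam) (ψx lam))
    (hψ0 : ∀ lam : ℝ, ψ lam 0 = 1) (hψx0 : ∀ lam : ℝ, ψx lam 0 = ht)
    (Φ Ψ : ℝ → ℝ)
    (hΦ : ∀ lam : ℝ, Φ lam =
      lam * (φx lam π + H * φ lam π) - H₁ * φx lam π - H₂ * φ lam π)
    (hΨ : ∀ lam : ℝ, Ψ lam =
      lam * (ψx lam π + H * ψ lam π) - H₁ * ψx lam π - H₂ * ψ lam π)
    (lamn : ℝ) (hΦn : Φ lamn = 0) (hΨn : Ψ lamn ≠ 0) (hH₁n : lamn ≠ H₁)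
    (hcont₁ : ContinuousAt (fun lam => ∫ x in (0:ℝ)..π, ψ lam x * φ lamn x) lamn)
    (hcont₂ : ContinuousAt (fun lam => ∫ x in (0:ℝ)..π, φ lam x * φ lamn x) lamn)
    (hcont₃ : ContinuousAt (fun lam => ψ lam π) lamn)
    (hcont₄ : ContinuousAt (fun lam => φ lam π) lamn)
    (γn : ℝ)
    (hγn : γn = (∫ x in (0:ℝ)..π, (φ lamn x) ^ 2) +
      (φx lamn π + H * φ lamn π) ^ 2 / (H * H₁ - H₂)) :
    HasDerivAt Φ (γn * Ψ lamn / (h - ht)) lamn :=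
  stmt_16_general q hq_meas hq_L2 h ht H H₁ H₂ hht hρ φ φx ψ ψx hφ hφ0 hφx0 hψ hψ0 hψx0 Φ Ψ hΦ hΨ
    lamn hΦn hH₁n hcont₂ hcont₄ γn hγn
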